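/- arXiv:1806.03035 — 3 statements merged into one kernel-verified Lean document; each statement's English description precedes it below -/
import Mathlib

section
/- Let Λ be a lattice in ℂ², and let ℓ₁ and ℓ₂ be two distinct one-dimensional ℂ-subspaces of ℂ² such that, for i = 1, 2, the intersection Λ ∩ ℓᵢ spans ℓᵢ over ℝ. Then the additive group homomorphism from (ℓ₁ ⧸ (Λ ∩ ℓ₁)) × (ℓ₂ ⧸ (Λ ∩ ℓ₂)) to ℂ² ⧸ Λ induced by (x, y) ↦ x + y is surjective and has finite kernel. -/
/-!
Two distinct complex lines in `ℂ²` are complementary, so every vector is `x + y` with `xᵢ ∈ ℓᵢ`,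
which gives surjectivity, and the decomposition is unique. Uniqueness makes the induced map into
`ℂ² ⧸ L`, where `L = (Λ ∩ ℓ₁) + (Λ ∩ ℓ₂)`, injective, and it sends the kernel into the image of
`Λ ⧸ L`. This quotient is finite because `L` is a sublattice of `Λ` of full rank.
-/

open Submodule

theorem Submodule.isCompl_of_finrank_eq_one {K V : Type*} [DivisionRing K] [AddCommGroup V]
    [Module K V] (hV : Module.finrank K V = 2) {p q : Submodule K V}
    (hp : Module.finrank K p = 1) (hq : Module.finrank K q = 1) (hpq : p ≠ q) :
    IsCompl p q := by
  have : FiniteDimensional K V := Module.finite_of_finrank_eq_succ hV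
  have hinf : p ⊓ q = ⊥ := by
    have hlt : p ⊓ q < p := inf_le_left.lt_of_ne fun h ↦
      hpq (eq_of_le_of_finrank_eq (h ▸ inf_le_right) (hp.trans hq.symm))
    have := finrank_lt_finrank_of_lt hlt
    exact finrank_eq_zero.mp (by omega)
  have hsup : p ⊔ q = ⊤ := by
    apply eq_top_of_finrank_eq
    have := finrank_sup_add_finrank_inf_eq p q
    rw [hinf, finrank_bot] at this
    omega
  exact ⟨disjoint_iff.mpr hinf, codisjoint_iff.mpr hsup⟩

theorem AddSubgroup.finite_quotient_of_le_of_span_eq_top {E : Type*} [NormedAddCommGroup E]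
    [NormedSpace ℝ E] [FiniteDimensional ℝ E] {K L : AddSubgroup E} [DiscreteTopology K]
    (hLK : L ≤ K) (hL : span ℝ (L : Set E) = ⊤) : Finite (K ⧸ L.addSubgroupOf K) := by
  have : DiscreteTopology L.toIntSubmodule := DiscreteTopology.of_subset ‹_› hLK
  have : DiscreteTopology K.toIntSubmodule := ‹_›
  have : IsZLattice ℝ L.toIntSubmodule := ⟨hL⟩
  have : IsZLattice ℝ K.toIntSubmodule := ⟨top_unique (hL ▸ span_mono hLK)⟩
  refine finiteQuotientOfFreeOfRankEq (L.toIntSubmodule.comap K.toIntSubmodule.subtype) ?_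
  rw [(comapSubtypeEquivOfLe (show L.toIntSubmodule ≤ K.toIntSubmodule from hLK)).finrank_eq,
    ZLattice.rank ℝ, ZLattice.rank ℝ]

theorem AddSubgroup.span_inf_sup_inf_eq_top {R M : Type*} [Ring R] [AddCommGroup M] [Module R M]
    {Λ : AddSubgroup M} {p q : Submodule R M} (hp : span R ((Λ : Set M) ∩ p) = p)
    (hq : span R ((Λ : Set M) ∩ q) = q) (hpq : p ⊔ q = ⊤) :
    span R ((Λ ⊓ p.toAddSubgroup ⊔ Λ ⊓ q.toAddSubgroup : AddSubgroup M) : Set M) = ⊤ := by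
  refine top_unique ?_
  calc ⊤ = span R ((Λ : Set M) ∩ p) ⊔ span R ((Λ : Set M) ∩ q) := by rw [hp, hq, hpq]
    _ ≤ _ := sup_le (span_mono fun _ hx ↦ AddSubgroup.mem_sup_left hx)
      (span_mono fun _ hx ↦ AddSubgroup.mem_sup_right hx)

namespace AddSubgroup

variable {G : Type*} [AddCommGroup G] (Λ M A B : AddSubgroup G)

def quotientSumMap (hA : Λ ⊓ A ≤ M) (hB : Λ ⊓ B ≤ M) :
    (A ⧸ Λ.addSubgroupOf A) × (B ⧸ Λ.addSubgroupOf B) →+ G ⧸ M :=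
  (QuotientAddGroup.map _ M A.subtype fun x hx ↦ hA ⟨hx, x.2⟩).coprod
    (QuotientAddGroup.map _ M B.subtype fun x hx ↦ hB ⟨hx, x.2⟩)

variable {Λ M A B}

@[simp]
theorem quotientSumMap_mk (hA : Λ ⊓ A ≤ M) (hB : Λ ⊓ B ≤ M) (x : A) (y : B) :
    quotientSumMap Λ M A B hA hB (x, y) = ((x + y : G) : G ⧸ M) :=
  rfl

theorem quotientSumMap_surjective (hA : Λ ⊓ A ≤ M) (hB : Λ ⊓ B ≤ M) (hAB : Codisjoint A B) :
    Function.Surjective (quotientSumMap Λ M A B hA hB) := by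
  rintro ⟨v⟩
  obtain ⟨x, hx, y, hy, rfl⟩ := mem_sup.mp (hAB.eq_top ▸ mem_top v)
  exact ⟨(QuotientAddGroup.mk ⟨x, hx⟩, QuotientAddGroup.mk ⟨y, hy⟩), rfl⟩

theorem quotientSumMap_injective (hAB : Disjoint A B) :
    Function.Injective (quotientSumMap Λ (Λ ⊓ A ⊔ Λ ⊓ B) A B le_sup_left le_sup_right) := by
  refine (injective_iff_map_eq_zero _).mpr ?_
  rintro ⟨⟨x⟩, ⟨y⟩⟩ h
  obtain ⟨u, hu, w, hw, huw⟩ := mem_sup.mp ((QuotientAddGroup.eq_zero_iff _).mp h)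
  obtain ⟨rfl, rfl⟩ := Prod.ext_iff.mp
    (add_injective_of_disjoint hAB (a₁ := (⟨u, hu.2⟩, ⟨w, hw.2⟩)) (a₂ := (x, y)) huw)
  exact Prod.ext ((QuotientAddGroup.eq_zero_iff _).mpr hu.1)
    ((QuotientAddGroup.eq_zero_iff _).mpr hw.1)

theorem finite_ker_quotientSumMap (hAB : Disjoint A B)
    (hΛ : Finite (Λ ⧸ (Λ ⊓ A ⊔ Λ ⊓ B).addSubgroupOf Λ)) :
    Finite (quotientSumMap Λ Λ A B inf_le_left inf_le_left).ker := by
  -- the kernel is carried injectively into the image of `Λ` in `G ⧸ L`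
  set L := Λ ⊓ A ⊔ Λ ⊓ B
  let reduce : Λ ⧸ L.addSubgroupOf Λ →+ G ⧸ L := QuotientAddGroup.map _ L Λ.subtype le_rfl
  have himage : quotientSumMap Λ L A B le_sup_left le_sup_right ''
      (quotientSumMap Λ Λ A B inf_le_left inf_le_left).ker ⊆ Set.range reduce := by
    rintro _ ⟨⟨⟨x⟩, ⟨y⟩⟩, hxy, rfl⟩
    exact ⟨QuotientAddGroup.mk ⟨_, (QuotientAddGroup.eq_zero_iff _).mp hxy⟩, rfl⟩
  exact ((Set.finite_range reduce).subset himage).of_finite_image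
    (quotientSumMap_injective hAB).injOn |>.to_subtype

end AddSubgroup

theorem induced_map_surjective_finite_kernel_general (Λ : AddSubgroup (ℂ × ℂ))
    (hdisc : DiscreteTopology Λ)
    (ℓ₁ ℓ₂ : Submodule ℂ (ℂ × ℂ))
    (h₁ : Module.finrank ℂ ℓ₁ = 1) (h₂ : Module.finrank ℂ ℓ₂ = 1)
    (hne : ℓ₁ ≠ ℓ₂)
    (hs₁ : Submodule.span ℝ ((Λ : Set (ℂ × ℂ)) ∩ (ℓ₁ : Set (ℂ × ℂ))) =
      ℓ₁.restrictScalars ℝ)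
    (hs₂ : Submodule.span ℝ ((Λ : Set (ℂ × ℂ)) ∩ (ℓ₂ : Set (ℂ × ℂ))) =
      ℓ₂.restrictScalars ℝ) :
    ∃ f : (↥ℓ₁.toAddSubgroup ⧸ Λ.addSubgroupOf ℓ₁.toAddSubgroup) ×
          (↥ℓ₂.toAddSubgroup ⧸ Λ.addSubgroupOf ℓ₂.toAddSubgroup) →+
          (ℂ × ℂ) ⧸ Λ,
      (∀ (x : ℓ₁.toAddSubgroup) (y : ℓ₂.toAddSubgroup),
          f (QuotientAddGroup.mk x, QuotientAddGroup.mk y) =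
            QuotientAddGroup.mk ((x : ℂ × ℂ) + (y : ℂ × ℂ))) ∧
      Function.Surjective f ∧ Finite (↥f.ker) := by
  have hℓ : IsCompl ℓ₁ ℓ₂ := isCompl_of_finrank_eq_one (by simp) h₁ h₂ hne
  have hℓ' : IsCompl ℓ₁.toAddSubgroup ℓ₂.toAddSubgroup :=
    AddSubgroup.toIntSubmodule.isCompl_iff.mpr ((isCompl_restrictScalars_iff ℤ).mpr hℓ)
  have hspan_sum := AddSubgroup.span_inf_sup_inf_eq_top (p := ℓ₁.restrictScalars ℝ)
    (q := ℓ₂.restrictScalars ℝ) hs₁ hs₂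
    ((codisjoint_restrictScalars_iff ℝ).mpr hℓ.codisjoint).eq_top
  refine ⟨AddSubgroup.quotientSumMap Λ Λ _ _ inf_le_left inf_le_left, AddSubgroup.quotientSumMap_mk _ _,
    AddSubgroup.quotientSumMap_surjective _ _ hℓ'.codisjoint,
    AddSubgroup.finite_ker_quotientSumMap hℓ'.disjoint ?_⟩
  exact AddSubgroup.finite_quotient_of_le_of_span_eq_top (sup_le inf_le_left inf_le_left) hspan_sum

/-- For a lattice `Λ` in `ℂ²` and distinct complex lines `ℓ₁, ℓ₂` such that `Λ ∩ ℓᵢ`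
spans `ℓᵢ` over `ℝ`, the homomorphism
`(ℓ₁ ⧸ (Λ ∩ ℓ₁)) × (ℓ₂ ⧸ (Λ ∩ ℓ₂)) → ℂ² ⧸ Λ` induced by `(x, y) ↦ x + y` is
surjective with finite kernel. -/
theorem induced_map_surjective_finite_kernel (Λ : AddSubgroup (ℂ × ℂ))
    (hdisc : DiscreteTopology Λ)
    (hspan : Submodule.span ℝ (Λ : Set (ℂ × ℂ)) = ⊤)
    (ℓ₁ ℓ₂ : Submodule ℂ (ℂ × ℂ))
    (h₁ : Module.finrank ℂ ℓ₁ = 1) (h₂ : Module.finrank ℂ ℓ₂ = 1)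
    (hne : ℓ₁ ≠ ℓ₂)
    (hs₁ : Submodule.span ℝ ((Λ : Set (ℂ × ℂ)) ∩ (ℓ₁ : Set (ℂ × ℂ))) =
      ℓ₁.restrictScalars ℝ)
    (hs₂ : Submodule.span ℝ ((Λ : Set (ℂ × ℂ)) ∩ (ℓ₂ : Set (ℂ × ℂ))) =
      ℓ₂.restrictScalars ℝ) :
    ∃ f : (↥ℓ₁.toAddSubgroup ⧸ Λ.addSubgroupOf ℓ₁.toAddSubgroup) ×
          (↥ℓ₂.toAddSubgroup ⧸ Λ.addSubgroupOf ℓ₂.toAddSubgroup) →+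
          (ℂ × ℂ) ⧸ Λ,
      (∀ (x : ℓ₁.toAddSubgroup) (y : ℓ₂.toAddSubgroup),
          f (QuotientAddGroup.mk x, QuotientAddGroup.mk y) =
            QuotientAddGroup.mk ((x : ℂ × ℂ) + (y : ℂ × ℂ))) ∧
      Function.Surjective f ∧ Finite (↥f.ker) :=
  induced_map_surjective_finite_kernel_general Λ hdisc ℓ₁ ℓ₂ h₁ h₂ hne hs₁ hs₂
end

section
/- Let Λ be a lattice in ℂ², and let ℓ₁ and ℓ₂ be two distinct one-dimensional ℂ-subspaces of ℂ² such that, for i = 1, 2, the intersection Λ ∩ ℓᵢ spans ℓᵢ over ℝ. Let q : ℂ² → ℂ² be the ℂ-linear projection onto ℓ₁ with kernel ℓ₂. Then q(Λ) is a discrete subgroup of ℂ², it contains Λ ∩ ℓ₁, and the quotient q(Λ) ⧸ (Λ ∩ ℓ₁) is finite. -/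
/-!
Count ℤ-ranks: a discrete subgroup of a real vector space has ℤ-rank equal to the real dimension
of its span, so `Λ` has rank 4 and each `Λ ∩ ℓᵢ` has rank 2. Since `q` kills `Λ ∩ ℓ₂`, rank-nullity
gives `q(Λ)` rank 2, the rank of its subgroup `Λ ∩ ℓ₁`; hence `q(Λ) ⧸ (Λ ∩ ℓ₁)` is a finitely
generated torsion group, i.e. finite, of some exponent `n`. Multiplication by `n` then injects
`q(Λ)` continuously into the discrete group `Λ ∩ ℓ₁`, so `q(Λ)` is discrete.
-/

open Module Submodule

theorem Submodule.finrank_restrictScalars {F K E : Type*} [Field F] [Field K] [Algebra F K]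
    [AddCommGroup E] [Module F E] [Module K E] [IsScalarTower F K E] (W : Submodule K E) :
    finrank F (W.restrictScalars F) = finrank F K * finrank K W :=
  (Module.finrank_mul_finrank F K W).symm

namespace AddSubgroup

theorem finrank_map_add_finrank_inf_ker {G G' : Type*} [AddCommGroup G] [AddCommGroup G']
    (f : G →+ G') (H : AddSubgroup G) [Module.Finite ℤ H] :
    finrank ℤ (H.map f) + finrank ℤ ↥(H ⊓ f.ker) = finrank ℤ H := by
  let g := (f.domRestrict H).toIntLinearMap
  have hrange : finrank ℤ (LinearMap.range g) = finrank ℤ (H.map f) := by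
    rw [← AddMonoidHom.domRestrict_range]
    rfl
  have hker : finrank ℤ (LinearMap.ker g) = finrank ℤ ↥(H ⊓ f.ker) := by
    have : (f.domRestrict H).ker = (H ⊓ f.ker).addSubgroupOf H := by
      rw [AddMonoidHom.ker_domRestrict, inf_addSubgroupOf_left]
    exact (AddEquiv.toIntLinearEquiv ((AddEquiv.addSubgroupCongr this).trans
      (addSubgroupOfEquivOfLe inf_le_left))).finrank_eq
  rw [← hrange, ← hker, ← g.quotKerEquivRange.finrank_eq]
  exact (LinearMap.ker g).finrank_quotient_add_finrank

theorem finite_quotient_of_finrank_le {G : Type*} [AddCommGroup G] {H K : AddSubgroup G}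
    [Module.Finite ℤ H] (hKH : K ≤ H) (hrank : finrank ℤ H ≤ finrank ℤ K) :
    Finite (H ⧸ K.addSubgroupOf H) := by
  let N := toIntSubmodule (K.addSubgroupOf H)
  have hN : finrank ℤ N = finrank ℤ K := (addSubgroupOfEquivOfLe hKH).toIntLinearEquiv.finrank_eq
  have hquot : finrank ℤ (H ⧸ N) = 0 := by
    have := N.finrank_quotient_add_finrank
    omega
  exact Module.finite_of_fg_torsion (H ⧸ N) (Module.finrank_eq_zero_iff_isTorsion.mp hquot)

theorem discreteTopology_of_finite_quotient {G : Type*} [AddCommGroup G] [TopologicalSpace G]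
    [ContinuousAdd G] [IsAddTorsionFree G] {H K : AddSubgroup G} [DiscreteTopology K]
    [Finite (H ⧸ K.addSubgroupOf H)] : DiscreteTopology H := by
  have hn : (K.addSubgroupOf H).index ≠ 0 := index_ne_zero_of_finite
  let φ : H → K := fun x ↦ ⟨(K.addSubgroupOf H).index • (x : G),
    (K.addSubgroupOf H).nsmul_index_mem x⟩
  refine DiscreteTopology.of_continuous_injective (f := φ) ?_ fun x y hxy ↦ ?_
  · exact ((continuous_nsmul _).comp continuous_subtype_val).subtype_mk _
  · exact Subtype.ext (nsmul_right_injective hn (congrArg Subtype.val hxy))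

theorem finrank_int_eq_finrank_span {E : Type*} [NormedAddCommGroup E] [NormedSpace ℝ E]
    [FiniteDimensional ℝ E] (H : AddSubgroup E) [DiscreteTopology H] :
    finrank ℤ H = finrank ℝ (span ℝ (H : Set E)) := by
  have hH : span ℤ (H : Set E) = toIntSubmodule H := toAddSubgroup_injective (span_int_eq H)
  have : DiscreteTopology (span ℤ (H : Set E)) := hH ▸ ‹DiscreteTopology H›
  rw [← Set.finrank, Real.finrank_eq_int_finrank_of_discrete this, Set.finrank, hH]
  rfl

theorem finrank_int_eq_two_mul_finrank_complex {E : Type*} [NormedAddCommGroup E]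
    [NormedSpace ℂ E] [FiniteDimensional ℂ E] (H : AddSubgroup E) [DiscreteTopology H]
    (W : Submodule ℂ E) (hW : span ℝ (H : Set E) = W.restrictScalars ℝ) :
    finrank ℤ H = 2 * finrank ℂ W := by
  rw [H.finrank_int_eq_finrank_span, hW, Submodule.finrank_restrictScalars,
    Complex.finrank_real_complex]

end AddSubgroup

theorem proj_lattice_discrete_finite_quotient_general (Λ : AddSubgroup (ℂ × ℂ))
    (hdisc : DiscreteTopology Λ)
    (hspan : Submodule.span ℝ (Λ : Set (ℂ × ℂ)) = ⊤)
    (ℓ₁ ℓ₂ : Submodule ℂ (ℂ × ℂ))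
    (h₁ : Module.finrank ℂ ℓ₁ = 1) (h₂ : Module.finrank ℂ ℓ₂ = 1)
    (hs₁ : Submodule.span ℝ ((Λ : Set (ℂ × ℂ)) ∩ (ℓ₁ : Set (ℂ × ℂ))) =
      ℓ₁.restrictScalars ℝ)
    (hs₂ : Submodule.span ℝ ((Λ : Set (ℂ × ℂ)) ∩ (ℓ₂ : Set (ℂ × ℂ))) =
      ℓ₂.restrictScalars ℝ)
    (q : (ℂ × ℂ) →ₗ[ℂ] (ℂ × ℂ))
    (hfix : ∀ x ∈ ℓ₁, q x = x)
    (hker : LinearMap.ker q = ℓ₂) :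
    DiscreteTopology (↥(Λ.map q.toAddMonoidHom)) ∧
    (Λ ⊓ ℓ₁.toAddSubgroup) ≤ Λ.map q.toAddMonoidHom ∧
    Finite (↥(Λ.map q.toAddMonoidHom) ⧸
      (Λ ⊓ ℓ₁.toAddSubgroup).addSubgroupOf (Λ.map q.toAddMonoidHom)) := by
  have : DiscreteTopology Λ.toIntSubmodule := hdisc
  have : Module.Finite ℤ Λ := instModuleFinite_of_discrete_submodule Λ.toIntSubmodule
  have : Module.Finite ℤ (Λ.map q.toAddMonoidHom) :=
    .of_surjective (q.toAddMonoidHom.addSubgroupMap Λ).toIntLinearMap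
      (q.toAddMonoidHom.addSubgroupMap_surjective Λ)
  have : ∀ ℓ : Submodule ℂ (ℂ × ℂ), DiscreteTopology ↥(Λ ⊓ ℓ.toAddSubgroup) :=
    fun _ ↦ .of_subset hdisc inf_le_left
  have hΛ : finrank ℤ Λ = 4 := by
    rw [Λ.finrank_int_eq_two_mul_finrank_complex ⊤ (by rwa [restrictScalars_top]), finrank_top,
      Module.finrank_prod, Module.finrank_self]
  have hline : ∀ ℓ : Submodule ℂ (ℂ × ℂ), finrank ℂ ℓ = 1 →
      span ℝ ((Λ : Set (ℂ × ℂ)) ∩ ℓ) = ℓ.restrictScalars ℝ →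
      finrank ℤ ↥(Λ ⊓ ℓ.toAddSubgroup) = 2 := by
    intro ℓ hℓ hsℓ
    rw [AddSubgroup.finrank_int_eq_two_mul_finrank_complex _ ℓ
      (by rw [AddSubgroup.coe_inf, Submodule.coe_toAddSubgroup, hsℓ]), hℓ]
  have hrank := Λ.finrank_map_add_finrank_inf_ker q.toAddMonoidHom
  rw [← LinearMap.ker_toAddSubgroup, hker, hline ℓ₂ h₂ hs₂, hΛ] at hrank
  have hsub : Λ ⊓ ℓ₁.toAddSubgroup ≤ Λ.map q.toAddMonoidHom := fun x hx ↦ ⟨x, hx.1, hfix x hx.2⟩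
  have hfin := AddSubgroup.finite_quotient_of_finrank_le hsub (by rw [hline ℓ₁ h₁ hs₁]; omega)
  exact ⟨AddSubgroup.discreteTopology_of_finite_quotient (K := Λ ⊓ ℓ₁.toAddSubgroup), hsub, hfin⟩

/-- For a lattice `Λ` in `ℂ²` and distinct complex lines `ℓ₁, ℓ₂` such that `Λ ∩ ℓᵢ`
spans `ℓᵢ` over `ℝ`, the image of `Λ` under the `ℂ`-linear projection `q` onto `ℓ₁`
with kernel `ℓ₂` is discrete, contains `Λ ∩ ℓ₁`, and `q(Λ) ⧸ (Λ ∩ ℓ₁)` is finite. -/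
theorem proj_lattice_discrete_finite_quotient (Λ : AddSubgroup (ℂ × ℂ))
    (hdisc : DiscreteTopology Λ)
    (hspan : Submodule.span ℝ (Λ : Set (ℂ × ℂ)) = ⊤)
    (ℓ₁ ℓ₂ : Submodule ℂ (ℂ × ℂ))
    (h₁ : Module.finrank ℂ ℓ₁ = 1) (h₂ : Module.finrank ℂ ℓ₂ = 1)
    (hne : ℓ₁ ≠ ℓ₂)
    (hs₁ : Submodule.span ℝ ((Λ : Set (ℂ × ℂ)) ∩ (ℓ₁ : Set (ℂ × ℂ))) =
      ℓ₁.restrictScalars ℝ)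
    (hs₂ : Submodule.span ℝ ((Λ : Set (ℂ × ℂ)) ∩ (ℓ₂ : Set (ℂ × ℂ))) =
      ℓ₂.restrictScalars ℝ)
    (q : (ℂ × ℂ) →ₗ[ℂ] (ℂ × ℂ))
    (hrange : LinearMap.range q = ℓ₁)
    (hfix : ∀ x ∈ ℓ₁, q x = x)
    (hker : LinearMap.ker q = ℓ₂) :
    DiscreteTopology (↥(Λ.map q.toAddMonoidHom)) ∧
    (Λ ⊓ ℓ₁.toAddSubgroup) ≤ Λ.map q.toAddMonoidHom ∧
    Finite (↥(Λ.map q.toAddMonoidHom) ⧸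
      (Λ ⊓ ℓ₁.toAddSubgroup).addSubgroupOf (Λ.map q.toAddMonoidHom)) :=
  proj_lattice_discrete_finite_quotient_general Λ hdisc hspan ℓ₁ ℓ₂ h₁ h₂ hs₁ hs₂ q hfix hker
end

section
/- Let Λ be a lattice in ℂ², and let ℓ₁, ℓ₂, ℓ₃ be pairwise distinct one-dimensional ℂ-subspaces of ℂ² such that, for i = 1, 2, 3, the intersection Λ ∩ ℓᵢ spans ℓᵢ over ℝ. Then there exists a ℂ-linear map f : ℂ² → ℂ² such that f maps ℓ₃ into ℓ₁, the restriction of f to ℓ₃ is injective (equivalently, f is nonzero on ℓ₃), and f maps Λ ∩ ℓ₃ into Λ ∩ ℓ₁. -/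
/-!
The subgroups `Λ ∩ ℓ₁` and `Λ ∩ ℓ₂` generate a subgroup `L ≤ Λ` whose real span is `ℂ²`.
Since `Λ` is discrete, `L` has finite index `N` in `Λ`: every coset of `L` in `Λ` meets the
bounded fundamental domain of the lattice `L`, which contains only finitely many points of `Λ`.
Then `f = N • (projection onto ℓ₁ along ℓ₂)` works: its kernel is `ℓ₂`, which meets `ℓ₃` only
in `0`, and for `x ∈ Λ` the vector `N • x ∈ L` is a point of `Λ ∩ ℓ₁` plus a point of `Λ ∩ ℓ₂`,
so `f x` is that point of `Λ ∩ ℓ₁`.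
-/

theorem AddSubgroup.relIndex_ne_zero_of_span_eq_top {E : Type*} [NormedAddCommGroup E]
    [NormedSpace ℝ E] [FiniteDimensional ℝ E] {L Λ : AddSubgroup E} [DiscreteTopology Λ]
    (hLΛ : L ≤ Λ) (hL : Submodule.span ℝ (L : Set E) = ⊤) : L.relIndex Λ ≠ 0 := by
  have : DiscreteTopology L.toIntSubmodule :=
    DiscreteTopology.of_subset (inferInstanceAs (DiscreteTopology Λ)) hLΛ
  have : IsZLattice ℝ L.toIntSubmodule := ⟨hL⟩
  let b := (Module.Free.chooseBasis ℤ L.toIntSubmodule).ofZLatticeBasis ℝ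
  have hfloor (x : E) : (ZSpan.floor b x : E) ∈ L :=
    (Module.Basis.ofZLatticeBasis_span ℝ _ _).le (ZSpan.floor b x).2
  have hS : (ZSpan.fundamentalDomain b ∩ Λ).Finite :=
    Metric.finite_isBounded_inter_isClosed DiscreteTopology.isDiscrete
      (ZSpan.fundamentalDomain_isBounded b) Λ.isClosed_of_discrete
  have := hS.to_subtype
  have : Finite (Λ ⧸ L.addSubgroupOf Λ) := by
    refine Finite.of_surjective (fun s : ↥(ZSpan.fundamentalDomain b ∩ Λ) ↦
      (QuotientAddGroup.mk ⟨s, s.2.2⟩ : Λ ⧸ L.addSubgroupOf Λ)) fun q ↦ ?_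
    obtain ⟨⟨x, hx⟩, rfl⟩ := QuotientAddGroup.mk_surjective q
    refine ⟨⟨ZSpan.fract b x, ZSpan.fract_mem_fundamentalDomain b x,
      Λ.sub_mem hx (hLΛ (hfloor x))⟩, QuotientAddGroup.eq.mpr ?_⟩
    simpa [AddSubgroup.mem_addSubgroupOf, ZSpan.fract_apply] using hfloor x
  exact AddSubgroup.index_ne_zero_of_finite

theorem Submodule.span_inf_sup_inf_eq_top {R E : Type*} [Ring R] [AddCommGroup E]
    [Module R E] {Λ : AddSubgroup E} {V W : Submodule R E}
    (hV : span R ((Λ : Set E) ∩ V) = V) (hW : span R ((Λ : Set E) ∩ W) = W) (hVW : V ⊔ W = ⊤) :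
    span R ((Λ ⊓ V.toAddSubgroup ⊔ Λ ⊓ W.toAddSubgroup : AddSubgroup E) : Set E) = ⊤ := by
  rw [eq_top_iff, ← hVW]
  exact sup_le (hV.ge.trans (span_mono fun _ hy ↦ AddSubgroup.mem_sup_left hy))
    (hW.ge.trans (span_mono fun _ hy ↦ AddSubgroup.mem_sup_right hy))

theorem Submodule.projection_mem_inf_of_mem_sup {R E : Type*} [Ring R] [AddCommGroup E]
    [Module R E] {p q : Submodule R E} (hpq : IsCompl p q) {Λ : AddSubgroup E} {x : E}
    (hx : x ∈ Λ ⊓ p.toAddSubgroup ⊔ Λ ⊓ q.toAddSubgroup) :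
    p.projection q hpq x ∈ Λ ⊓ p.toAddSubgroup := by
  obtain ⟨y, hy, z, hz, rfl⟩ := AddSubgroup.mem_sup.mp hx
  rw [map_add, projection_apply_of_mem_left hpq hy.2,
    (projection_apply_eq_zero_iff hpq).mpr hz.2, add_zero]
  exact hy

theorem exists_isogeny_map_general (Λ : AddSubgroup (ℂ × ℂ))
    (hdisc : DiscreteTopology Λ)
    (ℓ₁ ℓ₂ ℓ₃ : Submodule ℂ (ℂ × ℂ))
    (h₁ : Module.finrank ℂ ℓ₁ = 1) (h₂ : Module.finrank ℂ ℓ₂ = 1)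
    (h₃ : Module.finrank ℂ ℓ₃ = 1)
    (h12 : ℓ₁ ≠ ℓ₂) (h23 : ℓ₂ ≠ ℓ₃)
    (hs₁ : Submodule.span ℝ ((Λ : Set (ℂ × ℂ)) ∩ (ℓ₁ : Set (ℂ × ℂ))) =
      ℓ₁.restrictScalars ℝ)
    (hs₂ : Submodule.span ℝ ((Λ : Set (ℂ × ℂ)) ∩ (ℓ₂ : Set (ℂ × ℂ))) =
      ℓ₂.restrictScalars ℝ) :
    ∃ f : (ℂ × ℂ) →ₗ[ℂ] (ℂ × ℂ),
      (∀ x ∈ ℓ₃, f x ∈ ℓ₁) ∧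
      (∀ x ∈ ℓ₃, f x = 0 → x = 0) ∧
      (∀ x : ℂ × ℂ, x ∈ Λ → x ∈ ℓ₃ → f x ∈ Λ ∧ f x ∈ ℓ₁) := by
  have hatom {ℓ : Submodule ℂ (ℂ × ℂ)} (h : Module.finrank ℂ ℓ = 1) : IsAtom ℓ :=
    Submodule.isAtom_iff_finrank_eq_one.mpr h
  have hcompl : IsCompl ℓ₁ ℓ₂ := (Submodule.isCompl_iff_disjoint ℓ₁ ℓ₂ (by simp [h₁, h₂])).mpr
    ((hatom h₁).disjoint_of_ne (hatom h₂) h12)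
  set L := Λ ⊓ ℓ₁.toAddSubgroup ⊔ Λ ⊓ ℓ₂.toAddSubgroup
  have hL : Submodule.span ℝ (L : Set (ℂ × ℂ)) = ⊤ :=
    Submodule.span_inf_sup_inf_eq_top (V := ℓ₁.restrictScalars ℝ) (W := ℓ₂.restrictScalars ℝ)
      hs₁ hs₂ (by rw [← Submodule.restrictScalars_sup, hcompl.sup_eq_top,
        Submodule.restrictScalars_top])
  have hN : L.relIndex Λ ≠ 0 :=
    AddSubgroup.relIndex_ne_zero_of_span_eq_top (sup_le inf_le_left inf_le_left) hL
  refine ⟨L.relIndex Λ • ℓ₁.projection ℓ₂ hcompl, fun x _ ↦ ?_, fun x hx₃ hx ↦ ?_,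
    fun x hx _ ↦ ?_⟩
  · exact nsmul_mem (Submodule.projection_apply_mem hcompl x) _
  · have hx₂ : x ∈ ℓ₂ := (Submodule.projection_apply_eq_zero_iff hcompl).mp
      ((smul_eq_zero.mp hx).resolve_left hN)
    exact Submodule.disjoint_def.mp ((hatom h₂).disjoint_of_ne (hatom h₃) h23) x hx₂ hx₃
  · rw [LinearMap.smul_apply, ← map_nsmul]
    exact Submodule.projection_mem_inf_of_mem_sup hcompl (L.nsmul_relIndex_mem hx)

/-- For a lattice `Λ` in `ℂ²` and pairwise distinct complex lines `ℓ₁, ℓ₂, ℓ₃` such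
that `Λ ∩ ℓᵢ` spans `ℓᵢ` over `ℝ`, there is a `ℂ`-linear map `f : ℂ² → ℂ²` mapping
`ℓ₃` into `ℓ₁`, injective on `ℓ₃`, and mapping `Λ ∩ ℓ₃` into `Λ ∩ ℓ₁`. -/
theorem exists_isogeny_map (Λ : AddSubgroup (ℂ × ℂ))
    (hdisc : DiscreteTopology Λ)
    (hspan : Submodule.span ℝ (Λ : Set (ℂ × ℂ)) = ⊤)
    (ℓ₁ ℓ₂ ℓ₃ : Submodule ℂ (ℂ × ℂ))
    (h₁ : Module.finrank ℂ ℓ₁ = 1) (h₂ : Module.finrank ℂ ℓ₂ = 1)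
    (h₃ : Module.finrank ℂ ℓ₃ = 1)
    (h12 : ℓ₁ ≠ ℓ₂) (h13 : ℓ₁ ≠ ℓ₃) (h23 : ℓ₂ ≠ ℓ₃)
    (hs₁ : Submodule.span ℝ ((Λ : Set (ℂ × ℂ)) ∩ (ℓ₁ : Set (ℂ × ℂ))) =
      ℓ₁.restrictScalars ℝ)
    (hs₂ : Submodule.span ℝ ((Λ : Set (ℂ × ℂ)) ∩ (ℓ₂ : Set (ℂ × ℂ))) =
      ℓ₂.restrictScalars ℝ)
    (hs₃ : Submodule.span ℝ ((Λ : Set (ℂ × ℂ)) ∩ (ℓ₃ : Set (ℂ × ℂ))) =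
      ℓ₃.restrictScalars ℝ) :
    ∃ f : (ℂ × ℂ) →ₗ[ℂ] (ℂ × ℂ),
      (∀ x ∈ ℓ₃, f x ∈ ℓ₁) ∧
      (∀ x ∈ ℓ₃, f x = 0 → x = 0) ∧
      (∀ x : ℂ × ℂ, x ∈ Λ → x ∈ ℓ₃ → f x ∈ Λ ∧ f x ∈ ℓ₁) :=
  exists_isogeny_map_general Λ hdisc ℓ₁ ℓ₂ ℓ₃ h₁ h₂ h₃ h12 h23 hs₁ hs₂
end
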